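/- Let A be an associative unital algebra over a field K, generated by elements a, a*, g (g playing the role of q^N) subject to a·g = q·g·a, g·a* = q·a*·g, and a·a* − Q1·a*·a = Q2·g^2, with q, Q1, Q2 scalars and q, Q1 nonzero. Then for all n ∈ ℕ, a·(a*)^n = Q1^n (a*)^n a + Q2 ((Q1^n − q^{2n})/(Q1 − q^2)) (a*)^{n−1} g^2, provided Q1 ≠ q^2. -/

import Mathlib

/-!
Commuting `a` past `a*` produces at each step the correction term `Q2 g²`, which must then be
moved to the right past the remaining `a*`'s; since `g² a* = q² a* g²`, each move costs a factor
`q²`. Collecting terms, the coefficient of `(a*)^(n-1) g²` is `Q2` times the geometric sum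
`∑ Q1^i (q²)^(n-1-i) = (Q1^n - q^(2n)) / (Q1 - q²)`.
-/

open Finset

theorem pow_mul_eq_smul_mul_pow {K A : Type*} [CommSemiring K] [Semiring A] [Algebra K A]
    {x y : A} {c : K} (h : x * y = c • (y * x)) (n : ℕ) :
    x ^ n * y = c ^ n • (y * x ^ n) := by
  induction n with
  | zero => simp
  | succ n ih =>
    calc x ^ (n + 1) * y = x ^ n * (x * y) := by rw [pow_succ, mul_assoc]
      _ = c • ((x ^ n * y) * x) := by rw [h, mul_smul_comm, mul_assoc]
      _ = c ^ (n + 1) • (y * x ^ (n + 1)) := by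
        rw [ih, smul_mul_assoc, mul_assoc, ← pow_succ, smul_smul, ← pow_succ']

theorem mul_pow_eq_smul_add_geom_sum_smul {K A : Type*} [CommRing K] [Semiring A] [Algebra K A]
    {a y z : A} {Q r : K} (hay : a * y = Q • (y * a) + z) (hzy : z * y = r • (y * z)) (n : ℕ) :
    a * y ^ n = Q ^ n • (y ^ n * a) +
      (∑ i ∈ range n, Q ^ i * r ^ (n - 1 - i)) • (y ^ (n - 1) * z) := by
  induction n with
  | zero => simp
  | succ n ih =>
    have hmove : y ^ n * a * y = Q • (y ^ (n + 1) * a) + y ^ n * z := by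
      rw [mul_assoc, hay, mul_add, mul_smul_comm, ← mul_assoc, ← pow_succ]
    have hcorr : (∑ i ∈ range n, Q ^ i * r ^ (n - 1 - i)) • (y ^ (n - 1) * z) * y =
        (r * ∑ i ∈ range n, Q ^ i * r ^ (n - 1 - i)) • (y ^ n * z) := by
      rcases n with _ | m
      · simp
      · rw [smul_mul_assoc, mul_assoc, hzy, mul_smul_comm, ← mul_assoc, ← pow_succ, smul_smul,
          mul_comm r, Nat.add_sub_cancel]
    rw [pow_succ, ← mul_assoc, ih, add_mul, smul_mul_assoc, hmove, hcorr, smul_add, smul_smul,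
      ← pow_succ, ← pow_succ, add_assoc, ← add_smul, Nat.add_sub_cancel, geom_sum₂_succ_eq]

theorem stmt_8_general {K : Type*} [Field K] {A : Type*} [Ring A] [Algebra K A]
    (a astar g : A) (q Q1 Q2 : K) (hne : Q1 ≠ q ^ 2)
    (h2 : g * astar = q • (astar * g))
    (h3 : a * astar - Q1 • (astar * a) = Q2 • g ^ 2) :
    ∀ n : ℕ, a * astar ^ n =
      Q1 ^ n • (astar ^ n * a) +
      (Q2 * ((Q1 ^ n - q ^ (2 * n)) / (Q1 - q ^ 2))) • (astar ^ (n - 1) * g ^ 2) := by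
  intro n
  have hay : a * astar = Q1 • (astar * a) + Q2 • g ^ 2 := eq_add_of_sub_eq' h3
  have hzy : Q2 • g ^ 2 * astar = q ^ 2 • (astar * Q2 • g ^ 2) := by
    rw [smul_mul_assoc, pow_mul_eq_smul_mul_pow h2, mul_smul_comm, smul_comm]
  rw [mul_pow_eq_smul_add_geom_sum_smul hay hzy n, mul_smul_comm, smul_smul, pow_mul,
    mul_comm _ Q2, mul_div_assoc']
  congr 2
  rw [eq_div_iff (sub_ne_zero.mpr hne), mul_assoc, geom_sum₂_mul]

theorem stmt_8 {K : Type*} [Field K] {A : Type*} [Ring A] [Algebra K A]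
    (a astar g : A) (q Q1 Q2 : K) (hq : q ≠ 0) (hQ1 : Q1 ≠ 0) (hne : Q1 ≠ q ^ 2)
    (h1 : a * g = q • (g * a))
    (h2 : g * astar = q • (astar * g))
    (h3 : a * astar - Q1 • (astar * a) = Q2 • g ^ 2) :
    ∀ n : ℕ, a * astar ^ n =
      Q1 ^ n • (astar ^ n * a) +
      (Q2 * ((Q1 ^ n - q ^ (2 * n)) / (Q1 - q ^ 2))) • (astar ^ (n - 1) * g ^ 2) :=
  stmt_8_general a astar g q Q1 Q2 hne h2 h3
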